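/- Let D ⊆ 𝔽₂ⁿ be linearly independent, f : D → 𝔽₂, f^ext its linear extension to Span(D), ℓ ≥ 1, and let 𝒟 = Unif(Span(D))_{⊕ℓ}. Suppose χ_S for S ⊆ [ℓn] satisfies dist_𝒟(χ_S, (f^ext)_{⊕ℓ}) ≤ 1/2 − γ for some γ > 0. Let S⋆ ⊆ [n] be the set of block indices i such that S intersects the i-th block. Then |S⋆| ≤ |S| (indeed S must be block-complete so |S⋆| = |S|/ℓ), and χ_{S⋆}(y) = f(y) for every y ∈ D. -/

import Mathlib

open Finset
open scoped Classical

/-- A probability distribution given by a weight function on a finite type. -/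
def IsDist {α : Type*} [Fintype α] (μ : α → ℝ) : Prop :=
  (∀ a, 0 ≤ μ a) ∧ ∑ a, μ a = 1

/-- Probability of an event under a weight function. -/
noncomputable def pr {α : Type*} [Fintype α] (μ : α → ℝ) (P : α → Prop) : ℝ :=
  ∑ a ∈ univ.filter P, μ a

/-- 𝔽₂-valued parity χ_S. -/
def chi2 {ι : Type*} (S : Finset ι) (x : ι → ZMod 2) : ZMod 2 :=
  ∑ i ∈ S, x i

/-- ±1-valued parity χ_S. -/
noncomputable def chi {ι : Type*} (S : Finset ι) (x : ι → ZMod 2) : ℝ :=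
  ∏ i ∈ S, (-1 : ℝ) ^ (x i).val

/-- Blockwise parity: (𝔽₂^ℓ)ⁿ → 𝔽₂ⁿ. -/
def blockPar {n ℓ : ℕ} (y : Fin n × Fin ℓ → ZMod 2) : Fin n → ZMod 2 :=
  fun i => ∑ j, y (i, j)

/-- The parity-substituted distribution 𝒟_{⊕ℓ}: each block is uniform among the
2^(ℓ-1) strings with the prescribed block parity. -/
noncomputable def parSub {n ℓ : ℕ} (μ : (Fin n → ZMod 2) → ℝ)
    (y : Fin n × Fin ℓ → ZMod 2) : ℝ :=
  μ (blockPar y) / 2 ^ ((ℓ - 1) * n)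

/-- A function has Fourier degree at most `D`. -/
noncomputable def HasDegLE {ι : Type*} [Fintype ι] (h : (ι → ZMod 2) → ℝ) (D : ℕ) : Prop :=
  ∃ c : Finset ι → ℝ, (∀ S, c S ≠ 0 → S.card ≤ D) ∧
    ∀ x, h x = ∑ S : Finset ι, c S * chi S x

/-- Binary decision trees querying coordinates indexed by `ι`. -/
inductive DTree (ι : Type*) where
  | leaf : Bool → DTree ι
  | node : ι → DTree ι → DTree ι → DTree ι

namespace DTree

variable {ι : Type*}

/-- 𝔽₂-valued evaluation. -/
def eval : DTree ι → (ι → ZMod 2) → ZMod 2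
  | leaf b, _ => if b then 1 else 0
  | node i L R, x => if x i = 1 then eval R x else eval L x

/-- ±1-valued evaluation (0 ↦ 1, 1 ↦ -1). -/
noncomputable def evalpm (T : DTree ι) (x : ι → ZMod 2) : ℝ :=
  if eval T x = 0 then 1 else -1

/-- Number of leaves. -/
def size : DTree ι → ℕ
  | leaf _ => 1
  | node _ L R => size L + size R

/-- Depth. -/
def depth : DTree ι → ℕ
  | leaf _ => 0
  | node _ L R => max (depth L) (depth R) + 1

/-- `Truncation d T T'` : `T'` is obtained from `T` by truncating every path at
depth `d`, replacing the cut subtrees by arbitrary leaves. -/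
inductive Truncation : ℕ → DTree ι → DTree ι → Prop
  | leaf (d : ℕ) (b : Bool) : Truncation d (leaf b) (leaf b)
  | cut (T : DTree ι) (b : Bool) : Truncation 0 T (leaf b)
  | node (d : ℕ) (i : ι) (L R L' R' : DTree ι) :
      Truncation d L L' → Truncation d R R' →
      Truncation (d + 1) (node i L R) (node i L' R')

/-- The collection of sets of variables queried along individual root-to-leaf paths. -/
def pathVars [DecidableEq ι] : DTree ι → Finset (Finset ι)
  | leaf _ => {∅}
  | node i L R => (pathVars L ∪ pathVars R).image (insert i)

/-- Fourier coefficient of (the ±1 version of) a decision tree. -/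
noncomputable def fourierCoeff [Fintype ι] (T : DTree ι) (S : Finset ι) : ℝ :=
  (∑ x : ι → ZMod 2, T.evalpm x * chi S x) / Fintype.card (ι → ZMod 2)

end DTree

/-!
For `J ⊆ [m]` and `w` with `blockPar w = ∑ i ∈ J, x i`, the shift `(I, y) ↦ (I ∆ J, y + w)` is an
involution preserving the distribution. If `χ_S(w) ≠ ∑ i ∈ J, f i`, it exchanges the events
"χ_S agrees with `(f^ext)_{⊕ℓ}`" and "χ_S disagrees", so the disagreement probability would be
exactly `1/2`. Hence `χ_S` respects every such shift. Shifts with `J = ∅` include the sum of two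
unit vectors in the same block, which forces `S` to be a union of whole blocks; the shift by `x i`
placed in a single coordinate of each block then gives `χ_{S⋆}(x i) = f i`.
-/

open scoped symmDiff

theorem Finset.sum_symmDiff_of_zmod_two {ι G : Type*} [DecidableEq ι] [AddCommGroup G]
    [Module (ZMod 2) G] (s t : Finset ι) (g : ι → G) :
    ∑ i ∈ s ∆ t, g i = ∑ i ∈ s, g i + ∑ i ∈ t, g i := by
  have hunion : s ∆ t ∪ (s ∩ t) = s ∪ t := by
    ext; simp only [mem_union, mem_symmDiff, mem_inter]; tauto
  have hdisj : Disjoint (s ∆ t) (s ∩ t) := by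
    rw [Finset.disjoint_left]; intro a; simp only [mem_symmDiff, mem_inter]; tauto
  rw [← sum_union_inter, ← hunion, sum_union hdisj, add_assoc, ZModModule.add_self, add_zero]

theorem AddMonoidHom.card_fiber_mul_card_eq_card {G M : Type*} [AddGroup G] [Fintype G]
    [AddMonoid M] [Fintype M] [DecidableEq M] (φ : G →+ M) (hφ : Function.Surjective φ)
    (z : M) : #{g | φ g = z} * Fintype.card M = Fintype.card G := by
  calc #{g | φ g = z} * Fintype.card M = ∑ z' : M, #{g | φ g = z'} := by
        rw [sum_congr rfl fun z' _ => card_fiber_eq_of_mem_range φ (hφ z') (hφ z)]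
        simp [mul_comm]
    _ = Fintype.card G := (card_eq_sum_card_fiberwise fun g _ => mem_univ (φ g)).symm

theorem sum_filter_eq_half_of_involutive {α : Type*} [Fintype α] (μ : α → ℝ) (P : α → Prop)
    [DecidablePred P] (hμ : ∑ a, μ a = 1) (φ : α → α) (hφ : Function.Involutive φ)
    (hμφ : ∀ a, μ (φ a) = μ a) (hPφ : ∀ a, P (φ a) ↔ ¬ P a) :
    ∑ a ∈ univ.filter P, μ a = 1 / 2 := by
  have hswap : ∑ a ∈ univ.filter P, μ a = ∑ a ∈ univ.filter (¬ P ·), μ a :=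
    sum_nbij' φ φ (by simp [hPφ]) (by simp [hPφ]) (fun a _ => hφ a) (fun a _ => hφ a)
      (fun a _ => (hμφ a).symm)
  linarith [sum_filter_add_sum_filter_not univ P μ]

theorem chi2_add {ι : Type*} (S : Finset ι) (y y' : ι → ZMod 2) :
    chi2 S (y + y') = chi2 S y + chi2 S y' :=
  sum_add_distrib

section BlockParity

variable {n ℓ : ℕ}

def blockParHom : (Fin n × Fin ℓ → ZMod 2) →+ (Fin n → ZMod 2) where
  toFun := blockPar
  map_zero' := by ext; simp [blockPar]
  map_add' y y' := by ext; simp [blockPar, sum_add_distrib]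

theorem blockPar_add (y y' : Fin n × Fin ℓ → ZMod 2) :
    blockPar (y + y') = blockPar y + blockPar y' :=
  blockParHom.map_add y y'

theorem blockPar_single (p : Fin n × Fin ℓ) (a : ZMod 2) :
    blockPar (Pi.single p a) = Pi.single p.1 a := by
  ext i
  simp only [blockPar, Pi.single_apply, Prod.ext_iff]
  split_ifs with h <;> simp [h]

def blockEmbed (j₀ : Fin ℓ) (z : Fin n → ZMod 2) : Fin n × Fin ℓ → ZMod 2 :=
  fun p => if p.2 = j₀ then z p.1 else 0

theorem blockPar_blockEmbed (j₀ : Fin ℓ) (z : Fin n → ZMod 2) :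
    blockPar (blockEmbed j₀ z) = z := by
  ext i; simp [blockPar, blockEmbed]

theorem chi2_product_univ_blockEmbed (T : Finset (Fin n)) (j₀ : Fin ℓ) (z : Fin n → ZMod 2) :
    chi2 (T ×ˢ univ) (blockEmbed j₀ z) = chi2 T z := by
  simp [chi2, blockEmbed, sum_product]

theorem blockPar_surjective (hℓ : 1 ≤ ℓ) :
    Function.Surjective (blockPar : (Fin n × Fin ℓ → ZMod 2) → (Fin n → ZMod 2)) :=
  fun z => ⟨blockEmbed ⟨0, hℓ⟩ z, blockPar_blockEmbed _ z⟩

theorem card_blockPar_fiber (hℓ : 1 ≤ ℓ) (z : Fin n → ZMod 2) :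
    #{y : Fin n × Fin ℓ → ZMod 2 | blockPar y = z} = 2 ^ ((ℓ - 1) * n) := by
  have h := blockParHom.card_fiber_mul_card_eq_card (blockPar_surjective hℓ) z
  simp only [Fintype.card_fun, ZMod.card, Fintype.card_prod, Fintype.card_fin] at h
  have hpow : n * ℓ = (ℓ - 1) * n + n := by
    rw [Nat.sub_mul, one_mul, Nat.sub_add_cancel (Nat.le_mul_of_pos_left n hℓ), mul_comm]
  rw [hpow, pow_add] at h
  exact Nat.eq_of_mul_eq_mul_right (by positivity) h

theorem eq_image_fst_product_univ_of_chi2_ker (S : Finset (Fin n × Fin ℓ))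
    (hS : ∀ w, blockPar w = 0 → chi2 S w = 0) : S = S.image Prod.fst ×ˢ univ := by
  refine Subset.antisymm (fun p hp => mem_product.2 ⟨mem_image_of_mem _ hp, mem_univ _⟩) ?_
  rintro ⟨i, j⟩ hij
  obtain ⟨⟨i', j'⟩, hij', rfl⟩ := mem_image.1 (mem_product.1 hij).1
  have hker := hS (Pi.single (i', j') 1 + Pi.single (i', j) 1) (by
    rw [blockPar_add, blockPar_single, blockPar_single, ZModModule.add_self])
  simp only [chi2, Pi.add_apply, sum_add_distrib, sum_pi_single', if_pos hij'] at hker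
  by_contra hnot
  simp [hnot] at hker

end BlockParity

section SpanParitySubstitution

variable {n m ℓ : ℕ}

/-- Weight of `(I, y)` under `Unif(Span D)_{⊕ℓ}`, a point of `Span D` being recorded as the set
`I` of generators summing to it. -/
noncomputable def spanParSubWeight (x : Fin m → Fin n → ZMod 2) (ℓ : ℕ)
    (Iy : Finset (Fin m) × (Fin n × Fin ℓ → ZMod 2)) : ℝ :=
  (if blockPar Iy.2 = ∑ i ∈ Iy.1, x i then (1 : ℝ) else 0) / (2 ^ m * 2 ^ ((ℓ - 1) * n))

theorem sum_spanParSubWeight (hℓ : 1 ≤ ℓ) (x : Fin m → Fin n → ZMod 2) :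
    ∑ Iy, spanParSubWeight x ℓ Iy = 1 := by
  rw [Fintype.sum_prod_type]
  simp only [spanParSubWeight, ← sum_div]
  simp only [sum_boole, card_blockPar_fiber hℓ, sum_const, card_univ, Fintype.card_finset,
    Fintype.card_fin, nsmul_eq_mul]
  push_cast
  field_simp

theorem chi2_eq_of_sum_disagree_lt_half (hℓ : 1 ≤ ℓ) {x : Fin m → Fin n → ZMod 2}
    {f : Fin m → ZMod 2} {S : Finset (Fin n × Fin ℓ)}
    (hlt : ∑ Iy ∈ univ.filter (fun Iy : Finset (Fin m) × (Fin n × Fin ℓ → ZMod 2) =>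
      chi2 S Iy.2 ≠ ∑ i ∈ Iy.1, f i), spanParSubWeight x ℓ Iy < 1 / 2)
    (J : Finset (Fin m)) (w : Fin n × Fin ℓ → ZMod 2) (hw : blockPar w = ∑ i ∈ J, x i) :
    chi2 S w = ∑ i ∈ J, f i := by
  have hflip : ∀ a b c d : ZMod 2, c ≠ d → (a + c ≠ b + d ↔ ¬ a ≠ b) := by decide
  by_contra hne
  refine hlt.ne (sum_filter_eq_half_of_involutive _ _ (sum_spanParSubWeight hℓ x)
    (fun Iy => (Iy.1 ∆ J, Iy.2 + w)) (fun Iy => ?_) (fun Iy => ?_) (fun Iy => ?_))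
  · simp [symmDiff_symmDiff_cancel_right, add_assoc, ZModModule.add_self]
  · simp only [spanParSubWeight, blockPar_add, hw, sum_symmDiff_of_zmod_two, add_left_inj]
  · simp only [chi2_add, sum_symmDiff_of_zmod_two]
    exact hflip _ _ _ _ hne

end SpanParitySubstitution

theorem stmt14_general {n m ℓ : ℕ} (hℓ : 1 ≤ ℓ) (x : Fin m → (Fin n → ZMod 2))
    (f : Fin m → ZMod 2)
    (S : Finset (Fin n × Fin ℓ)) (γ : ℝ) (hγ : 0 < γ)
    (hdist : ∑ Iy ∈ Finset.univ.filter
        (fun Iy : Finset (Fin m) × (Fin n × Fin ℓ → ZMod 2) =>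
          chi2 S Iy.2 ≠ ∑ i ∈ Iy.1, f i),
        (if blockPar Iy.2 = ∑ i ∈ Iy.1, x i then (1 : ℝ) else 0)
          / (2 ^ m * 2 ^ ((ℓ - 1) * n))
      ≤ 1 / 2 - γ) :
    S = (S.image Prod.fst) ×ˢ Finset.univ ∧
    ℓ * (S.image Prod.fst).card = S.card ∧
    (S.image Prod.fst).card ≤ S.card ∧
    ∀ i, chi2 (S.image Prod.fst) (x i) = f i := by
  have hlt := chi2_eq_of_sum_disagree_lt_half hℓ (x := x) (f := f) (S := S)
    (hdist.trans_lt (by linarith))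
  have hcomplete : S = S.image Prod.fst ×ˢ univ :=
    eq_image_fst_product_univ_of_chi2_ker S fun w hw => by
      simpa using hlt ∅ w (by simpa using hw)
  have hcard : ℓ * (S.image Prod.fst).card = S.card := by
    conv_rhs => rw [hcomplete]
    rw [card_product, card_univ, Fintype.card_fin, mul_comm]
  refine ⟨hcomplete, hcard, hcard ▸ Nat.le_mul_of_pos_left _ hℓ, fun i => ?_⟩
  have hi := hlt {i} (blockEmbed ⟨0, hℓ⟩ (x i)) (by rw [blockPar_blockEmbed, sum_singleton])
  rwa [hcomplete, chi2_product_univ_blockEmbed, sum_singleton] at hi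

theorem stmt14 {n m ℓ : ℕ} (hℓ : 1 ≤ ℓ) (x : Fin m → (Fin n → ZMod 2))
    (hx : LinearIndependent (ZMod 2) x) (f : Fin m → ZMod 2)
    (S : Finset (Fin n × Fin ℓ)) (γ : ℝ) (hγ : 0 < γ)
    (hdist : ∑ Iy ∈ Finset.univ.filter
        (fun Iy : Finset (Fin m) × (Fin n × Fin ℓ → ZMod 2) =>
          chi2 S Iy.2 ≠ ∑ i ∈ Iy.1, f i),
        (if blockPar Iy.2 = ∑ i ∈ Iy.1, x i then (1 : ℝ) else 0)
          / (2 ^ m * 2 ^ ((ℓ - 1) * n))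
      ≤ 1 / 2 - γ) :
    S = (S.image Prod.fst) ×ˢ Finset.univ ∧
    ℓ * (S.image Prod.fst).card = S.card ∧
    (S.image Prod.fst).card ≤ S.card ∧
    ∀ i, chi2 (S.image Prod.fst) (x i) = f i :=
  stmt14_general hℓ x f S γ hγ hdist
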